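/- arXiv:2003.09251 — 2 statements merged into one kernel-verified Lean document; each statement's English description precedes it below -/
import Mathlib

section
/- Fix j ∈ {1,…,N} and assume: (a) (D_j R_j A V, W^j) = (D_j B_j R_j V, W^j) for all V ∈ ℂ^n and all W^j ∈ ℂ^{n_j}; (e) there exists C_{DB,j} > 0 with |([D_j, B_j] V^j, W^j)| ≤ C_{DB,j} ‖V^j‖_{Ω_j} ‖W^j‖_{Ω_j} for all V^j, W^j ∈ ℂ^{n_j}; (f) there exists C_{stab,j} > 0 such that ‖U^j‖_{Ω_j} ≤ C_{stab,j} · max_{W^j ≠ 0} |(B_j U^j, W^j)| / ‖W^j‖_{Ω_j} for all U^j ∈ ℂ^{n_j}. Then for all V ∈ ℂ^n, ‖(B_j⁻¹ D_j R_j A − D_j R_j) V‖_{Ω_j} ≤ C_{stab,j} C_{DB,j} ‖R_j V‖_{Ω_j}. -/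
open Matrix
open scoped ComplexOrder

/-- Hermitian inner product `(V, W) = W* V`. -/
noncomputable def iprod {m : ℕ} (V W : Fin m → ℂ) : ℂ := star W ⬝ᵥ V

/-- Weighted norm `‖V‖_F = ((F V, V))^{1/2}` for a Hermitian positive definite `F`. -/
noncomputable def wnorm {m : ℕ} (F : Matrix (Fin m) (Fin m) ℂ) (V : Fin m → ℂ) : ℝ :=
  Real.sqrt (iprod (F.mulVec V) V).re

/-! The identity (a) says `D R A = D B R`, hence `B (B⁻¹ D R A - D R) = [D, B] R`: the stability
estimate (f) applied to `U = (B⁻¹ D R A - D R) V` and the commutator bound (e) then give the claim. -/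

lemma eq_of_forall_iprod_eq {m : ℕ} {X Y : Fin m → ℂ} (h : ∀ W, iprod X W = iprod Y W) :
    X = Y := by
  funext i
  simpa [iprod, dotProduct, Pi.single_apply] using h (Pi.single i 1)

lemma mul_mulVec_sub_eq_commutator_mulVec {α ι κ : Type*} [CommRing α] [Fintype ι]
    [Fintype κ] [DecidableEq κ] {A : Matrix ι ι α} {R : Matrix κ ι α} {D B : Matrix κ κ α}
    (hB : IsUnit B) {V : ι → α} (hDRA : D *ᵥ R *ᵥ A *ᵥ V = D *ᵥ B *ᵥ R *ᵥ V) :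
    B *ᵥ (B⁻¹ * D * R * A - D * R) *ᵥ V = (D * B - B * D) *ᵥ R *ᵥ V := by
  have hBinv : B * B⁻¹ = 1 := mul_nonsing_inv B ((isUnit_iff_isUnit_det B).mp hB)
  have hBM : B * (B⁻¹ * D * R * A - D * R) = D * R * A - B * D * R := by
    simp only [Matrix.mul_sub, ← Matrix.mul_assoc, hBinv, Matrix.one_mul]
  calc B *ᵥ (B⁻¹ * D * R * A - D * R) *ᵥ V
      = (D * R * A) *ᵥ V - (B * D * R) *ᵥ V := by rw [mulVec_mulVec, hBM, sub_mulVec]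
    _ = (D * B * R) *ᵥ V - (B * D * R) *ᵥ V := by
        simp only [← mulVec_mulVec] at hDRA ⊢
        rw [hDRA]
    _ = (D * B - B * D) *ᵥ R *ᵥ V := by rw [← sub_mulVec, mulVec_mulVec, Matrix.sub_mul]

lemma wnorm_nonneg {m : ℕ} (F : Matrix (Fin m) (Fin m) ℂ) (V : Fin m → ℂ) : 0 ≤ wnorm F V :=
  Real.sqrt_nonneg _

lemma iSup_norm_iprod_div_wnorm_le {m : ℕ} {F : Matrix (Fin m) (Fin m) ℂ} {X : Fin m → ℂ}
    {c : ℝ} (hc : 0 ≤ c) (hX : ∀ W, ‖iprod X W‖ ≤ c * wnorm F W) :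
    ⨆ W : {W : Fin m → ℂ // W ≠ 0}, ‖iprod X W.1‖ / wnorm F W.1 ≤ c :=
  Real.iSup_le (fun W => div_le_of_le_mul₀ (wnorm_nonneg F W.1) hc (hX W.1)) hc

theorem stmt3_general (n m : ℕ)
    (A : Matrix (Fin n) (Fin n) ℂ)
    (R : Matrix (Fin m) (Fin n) ℂ)
    (D B : Matrix (Fin m) (Fin m) ℂ)
    (FF : Matrix (Fin m) (Fin m) ℂ)
    (hB : IsUnit B)
    (CDB Cstab : ℝ) (hCDB : 0 < CDB) (hCstab : 0 < Cstab)
    (ha : ∀ (V : Fin n → ℂ) (W : Fin m → ℂ),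
      iprod (D.mulVec (R.mulVec (A.mulVec V))) W
        = iprod (D.mulVec (B.mulVec (R.mulVec V))) W)
    (he : ∀ V W : Fin m → ℂ,
      ‖iprod ((D * B - B * D).mulVec V) W‖ ≤ CDB * wnorm FF V * wnorm FF W)
    (hf : ∀ U : Fin m → ℂ,
      wnorm FF U ≤ Cstab * ⨆ W : {W : Fin m → ℂ // W ≠ 0},
        ‖iprod (B.mulVec U) W.1‖ / wnorm FF W.1) :
    ∀ V : Fin n → ℂ,
      wnorm FF ((B⁻¹ * D * R * A - D * R).mulVec V) ≤ Cstab * CDB * wnorm FF (R.mulVec V) := by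
  intro V
  have hBU := mul_mulVec_sub_eq_commutator_mulVec hB (eq_of_forall_iprod_eq (ha V))
  have hdual : ⨆ W : {W : Fin m → ℂ // W ≠ 0},
      ‖iprod (B *ᵥ (B⁻¹ * D * R * A - D * R) *ᵥ V) W.1‖ / wnorm FF W.1
        ≤ CDB * wnorm FF (R *ᵥ V) := by
    rw [hBU]
    exact iSup_norm_iprod_div_wnorm_le (mul_nonneg hCDB.le (wnorm_nonneg FF _)) (he _)
  calc wnorm FF ((B⁻¹ * D * R * A - D * R) *ᵥ V)
      ≤ Cstab * (CDB * wnorm FF (R *ᵥ V)) :=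
        (hf _).trans (mul_le_mul_of_nonneg_left hdual hCstab.le)
    _ = Cstab * CDB * wnorm FF (R *ᵥ V) := by ring

/-- under the local/global compatibility (a), the commutator bound (e)
and the inf-sup stability (f), `‖(B⁻¹ D R A − D R) V‖_{Ω_j} ≤ C_stab C_DB ‖R V‖_{Ω_j}`. -/
theorem stmt3 (n m N : ℕ) (hn : 1 ≤ n) (hN : 1 ≤ N) (hm : 1 ≤ m)
    (A : Matrix (Fin n) (Fin n) ℂ)
    (R : Matrix (Fin m) (Fin n) ℂ)
    (D B : Matrix (Fin m) (Fin m) ℂ)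
    (FF : Matrix (Fin m) (Fin m) ℂ)
    (hD : ∃ dd : Fin m → ℝ, (∀ i, 0 ≤ dd i) ∧ D = Matrix.diagonal fun i => (dd i : ℂ))
    (hB : IsUnit B)
    (hFF : FF.PosDef)
    (CDB Cstab : ℝ) (hCDB : 0 < CDB) (hCstab : 0 < Cstab)
    (ha : ∀ (V : Fin n → ℂ) (W : Fin m → ℂ),
      iprod (D.mulVec (R.mulVec (A.mulVec V))) W
        = iprod (D.mulVec (B.mulVec (R.mulVec V))) W)
    (he : ∀ V W : Fin m → ℂ,
      ‖iprod ((D * B - B * D).mulVec V) W‖ ≤ CDB * wnorm FF V * wnorm FF W)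
    (hf : ∀ U : Fin m → ℂ,
      wnorm FF U ≤ Cstab * ⨆ W : {W : Fin m → ℂ // W ≠ 0},
        ‖iprod (B.mulVec U) W.1‖ / wnorm FF W.1) :
    ∀ V : Fin n → ℂ,
      wnorm FF ((B⁻¹ * D * R * A - D * R).mulVec V) ≤ Cstab * CDB * wnorm FF (R.mulVec V) :=
  stmt3_general n m A R D B FF hB CDB Cstab hCDB hCstab ha he hf
end

section
/- Let Ω_j ⊆ Ω be open, let δ > 0 and C_dPU > 0, and let χ : ℝ^d → ℝ be a differentiable function with |χ(x)| ≤ 1 and |∇χ(x)| ≤ C_dPU / δ for all x ∈ Ω_j. Then for all differentiable functions v, w : ℝ^d → ℝ whose values and gradients are square-integrable on Ω_j and square-integrable with respect to σ_j (with all relevant products integrable, and with χ v, χ w having square-integrable values and gradients on Ω_j), the commutator bound | a_j(v, χ w) − a_j(χ v, w) | ≤ C_dPU · ( ν₊ / √(c̃₋ ν₋) + A_∞ / c̃₋ ) · (1/δ) · ‖v‖_{1,c,Ω_j} ‖w‖_{1,c,Ω_j} holds (the boundary terms ∫ α v (χ w) dσ_j and ∫ α (χ v) w dσ_j cancel exactly).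 -/
open MeasureTheory
open scoped RealInnerProductSpace

/-!
By the product rule ∇(χw) = χ∇w + w∇χ, the reaction terms, the boundary terms and every
term not hitting ∇χ cancel in a_j(v, χw) − a_j(χv, w), leaving the integrand
ν (w ∇v − v ∇w)·∇χ − v w a·∇χ. With |∇χ| ≤ C_dPU/δ, |a| ≤ A_∞, c̃ ≥ c̃₋ and ν₋ ≤ ν ≤ ν₊ it is
bounded pointwise by C_dPU/δ (ν₊/√(c̃₋ν₋) + A_∞/c̃₋) times √(c̃v² + ν|∇v|²) √(c̃w² + ν|∇w|²)
(a two-dimensional Cauchy–Schwarz handles the diffusion part), and Cauchy–Schwarz in L²(Ω_j)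
concludes.
-/

section Scalar

theorem sqrt_mul_mul_add_mul_le_sqrt_mul_sqrt {c ν u w p q : ℝ} (hc : 0 ≤ c) (hν : 0 ≤ ν) :
    √(c * ν) * (|w| * p + |u| * q) ≤ √(c * u ^ 2 + ν * p ^ 2) * √(c * w ^ 2 + ν * q ^ 2) := by
  rw [← Real.sqrt_mul (by positivity)]
  apply Real.le_sqrt_of_sq_le
  rw [mul_pow, Real.sq_sqrt (by positivity), ← sq_abs u, ← sq_abs w]
  -- the two sides differ by (c|u||w| - νpq)²
  nlinarith [sq_nonneg (c * |u| * |w| - ν * p * q)]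

theorem mul_abs_mul_abs_le_sqrt_mul_sqrt {c ν u w p q : ℝ} (hc : 0 ≤ c) (hν : 0 ≤ ν) :
    c * (|u| * |w|) ≤ √(c * u ^ 2 + ν * p ^ 2) * √(c * w ^ 2 + ν * q ^ 2) := by
  calc c * (|u| * |w|) = √(c * u ^ 2) * √(c * w ^ 2) := by
        rw [← Real.sqrt_mul (by positivity), ← sq_abs u, ← sq_abs w,
          show c * |u| ^ 2 * (c * |w| ^ 2) = (c * (|u| * |w|)) ^ 2 by ring,
          Real.sqrt_sq (by positivity)]
    _ ≤ _ := by gcongr <;> nlinarith [sq_nonneg p, sq_nonneg q]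

end Scalar

section Integral

variable {α : Type*} [MeasurableSpace α] {μ : Measure α}

theorem memLp_two_sqrt {F : α → ℝ} (hF : Integrable F μ) (hF₀ : 0 ≤ᵐ[μ] F) :
    MemLp (fun x => √(F x)) 2 μ := by
  rw [memLp_two_iff_integrable_sq
    (Real.continuous_sqrt.comp_aestronglyMeasurable hF.aestronglyMeasurable)]
  exact hF.congr (by filter_upwards [hF₀] with x hx using (Real.sq_sqrt hx).symm)

theorem integral_sqrt_mul_sqrt_le {F G : α → ℝ} (hF : Integrable F μ) (hG : Integrable G μ)
    (hF₀ : 0 ≤ᵐ[μ] F) (hG₀ : 0 ≤ᵐ[μ] G) :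
    ∫ x, √(F x) * √(G x) ∂μ ≤ √(∫ x, F x ∂μ) * √(∫ x, G x ∂μ) := by
  have hsq : ∀ {H : α → ℝ}, 0 ≤ᵐ[μ] H → (fun x => √(H x) ^ (2 : ℝ)) =ᵐ[μ] H := fun hH => by
    filter_upwards [hH] with x hx
    rw [Real.rpow_two, Real.sq_sqrt hx]
  have h := integral_mul_le_Lp_mul_Lq_of_nonneg Real.HolderConjugate.two_two
    (.of_forall fun x => Real.sqrt_nonneg (F x)) (.of_forall fun x => Real.sqrt_nonneg (G x))
    (by simpa using memLp_two_sqrt hF hF₀) (by simpa using memLp_two_sqrt hG hG₀)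
  rwa [integral_congr_ae (hsq hF₀), integral_congr_ae (hsq hG₀), ← Real.sqrt_eq_rpow,
    ← Real.sqrt_eq_rpow] at h

theorem abs_integral_le_mul_sqrt_mul_sqrt {f F G : α → ℝ} {K : ℝ} (hK : 0 ≤ K)
    (hF : Integrable F μ) (hG : Integrable G μ) (hF₀ : 0 ≤ᵐ[μ] F) (hG₀ : 0 ≤ᵐ[μ] G)
    (hf : ∀ᵐ x ∂μ, |f x| ≤ K * (√(F x) * √(G x))) :
    |∫ x, f x ∂μ| ≤ K * (√(∫ x, F x ∂μ) * √(∫ x, G x ∂μ)) :=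
  calc |∫ x, f x ∂μ| = ‖∫ x, f x ∂μ‖ := (Real.norm_eq_abs _).symm
    _ ≤ ∫ x, K * (√(F x) * √(G x)) ∂μ :=
        norm_integral_le_of_norm_le ((show Integrable (fun x => √(F x) * √(G x)) μ from
          (memLp_two_sqrt hF hF₀).integrable_mul (memLp_two_sqrt hG hG₀)).const_mul K) hf
    _ = K * ∫ x, √(F x) * √(G x) ∂μ := integral_const_mul K _
    _ ≤ K * (√(∫ x, F x ∂μ) * √(∫ x, G x ∂μ)) := by
        gcongr
        exact integral_sqrt_mul_sqrt_le hF hG hF₀ hG₀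

theorem ae_norm_le_of_ae_le_of_le {f : α → ℝ} {lo hi : ℝ} (hlo : 0 ≤ lo)
    (hf : ∀ᵐ x ∂μ, lo ≤ f x ∧ f x ≤ hi) : ∀ᵐ x ∂μ, ‖f x‖ ≤ hi :=
  hf.mono fun _ hx => (Real.norm_of_nonneg (hlo.trans hx.1)).trans_le hx.2

theorem integrable_mul_sq_add_mul_norm_sq {E : Type*} [NormedAddCommGroup E]
    {c ν u : α → ℝ} {g : α → E} {C N : ℝ} (hu : MemLp u 2 μ) (hg : MemLp g 2 μ)
    (hc : AEStronglyMeasurable c μ) (hcC : ∀ᵐ x ∂μ, ‖c x‖ ≤ C)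
    (hν : AEStronglyMeasurable ν μ) (hνN : ∀ᵐ x ∂μ, ‖ν x‖ ≤ N) :
    Integrable (fun x => c x * u x ^ 2 + ν x * ‖g x‖ ^ 2) μ :=
  (hu.integrable_sq.bdd_mul hc hcC).add (hg.norm.integrable_sq.bdd_mul hν hνN)

end Integral

section Commutator

variable {E : Type*} [NormedAddCommGroup E] [InnerProductSpace ℝ E]

theorem abs_commutator_density_le {c ν u w cmin νmin νmax A L : ℝ} {a gu gw gχ : E}
    (hcmin : 0 < cmin) (hνmin : 0 < νmin) (hc : cmin ≤ c) (hν : νmin ≤ ν) (hνmax : ν ≤ νmax)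
    (ha : ‖a‖ ≤ A) (hgχ : ‖gχ‖ ≤ L) :
    |ν * (w * ⟪gu, gχ⟫ - u * ⟪gw, gχ⟫) - u * w * ⟪a, gχ⟫|
      ≤ L * (νmax / √(cmin * νmin) + A / cmin)
        * (√(c * u ^ 2 + ν * ‖gu‖ ^ 2) * √(c * w ^ 2 + ν * ‖gw‖ ^ 2)) := by
  set N := √(c * u ^ 2 + ν * ‖gu‖ ^ 2) * √(c * w ^ 2 + ν * ‖gw‖ ^ 2)
  have hc₀ : 0 ≤ c := hcmin.le.trans hc
  have hν₀ : 0 ≤ ν := hνmin.le.trans hν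
  have hL : 0 ≤ L := (norm_nonneg _).trans hgχ
  have hA : 0 ≤ A := (norm_nonneg _).trans ha
  have hνmax₀ : 0 ≤ νmax := hν₀.trans hνmax
  have hdiffusion : √(cmin * νmin) * (|w| * ‖gu‖ + |u| * ‖gw‖) ≤ N :=
    calc √(cmin * νmin) * (|w| * ‖gu‖ + |u| * ‖gw‖)
        ≤ √(c * ν) * (|w| * ‖gu‖ + |u| * ‖gw‖) := by gcongr
      _ ≤ N := sqrt_mul_mul_add_mul_le_sqrt_mul_sqrt hc₀ hν₀
  have hconvection : cmin * (|u| * |w|) ≤ N :=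
    (mul_le_mul_of_nonneg_right hc (by positivity)).trans
      (mul_abs_mul_abs_le_sqrt_mul_sqrt hc₀ hν₀)
  have hinner : ∀ y : E, |⟪y, gχ⟫| ≤ ‖y‖ * L := fun y =>
    (abs_real_inner_le_norm y gχ).trans (by gcongr)
  calc |ν * (w * ⟪gu, gχ⟫ - u * ⟪gw, gχ⟫) - u * w * ⟪a, gχ⟫|
      ≤ ν * (|w| * |⟪gu, gχ⟫| + |u| * |⟪gw, gχ⟫|) + |u| * |w| * |⟪a, gχ⟫| := by
        refine (abs_sub _ _).trans ?_
        simp only [abs_mul, abs_of_nonneg hν₀]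
        gcongr
        exact (abs_sub _ _).trans_eq (by rw [abs_mul, abs_mul])
    _ ≤ νmax * (|w| * (‖gu‖ * L) + |u| * (‖gw‖ * L)) + |u| * |w| * (A * L) := by
        gcongr <;> first | exact hinner _ | exact (hinner a).trans (by gcongr)
    _ = νmax * L * (|w| * ‖gu‖ + |u| * ‖gw‖) + A * L * (|u| * |w|) := by ring
    _ ≤ νmax * L * (N / √(cmin * νmin)) + A * L * (N / cmin) := by
        gcongr
        · exact (le_div_iff₀' (by positivity)).mpr hdiffusion
        · exact (le_div_iff₀' hcmin).mpr hconvection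
    _ = L * (νmax / √(cmin * νmin) + A / cmin) * N := by ring

end Commutator

section LocalForm

variable {E : Type*} [NormedAddCommGroup E] [InnerProductSpace ℝ E] [CompleteSpace E]

theorem gradient_fun_mul {f g : E → ℝ} {x : E} (hf : DifferentiableAt ℝ f x)
    (hg : DifferentiableAt ℝ g x) :
    gradient (fun y => f y * g y) x = f x • gradient g x + g x • gradient f x := by
  rw [gradient, fderiv_fun_mul hf hg, map_add, map_smul, map_smul]
  rfl

noncomputable def localFormDensity (c ν : E → ℝ) (a : E → E) (u v : E → ℝ) (x : E) : ℝ :=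
  c x * u x * v x + (1 / 2) * ⟪a x, gradient u x⟫ * v x - (1 / 2) * u x * ⟪a x, gradient v x⟫
    + ν x * ⟪gradient u x, gradient v x⟫

theorem localFormDensity_mul_sub_mul_localFormDensity (c ν : E → ℝ) (a : E → E)
    {χ u w : E → ℝ} {x : E} (hχ : DifferentiableAt ℝ χ x)
    (hu : DifferentiableAt ℝ u x) (hw : DifferentiableAt ℝ w x) :
    localFormDensity c ν a u (fun y => χ y * w y) x
        - localFormDensity c ν a (fun y => χ y * u y) w x
      = ν x * (w x * ⟪gradient u x, gradient χ x⟫ - u x * ⟪gradient w x, gradient χ x⟫)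
        - u x * w x * ⟪a x, gradient χ x⟫ := by
  simp only [localFormDensity, gradient_fun_mul hχ hu, gradient_fun_mul hχ hw, inner_add_left,
    inner_add_right, real_inner_smul_left, real_inner_smul_right,
    real_inner_comm (gradient χ x)]
  ring

end LocalForm

theorem stmt13_general (d : ℕ)
    (Ω : Set (EuclideanSpace ℝ (Fin d)))
    (ct ν : EuclideanSpace ℝ (Fin d) → ℝ) (hctm : Measurable ct) (hνm : Measurable ν)
    (ctlo cthi νlo νhi : ℝ)
    (hctlo : 0 < ctlo) (hνlo : 0 < νlo) (hν : νlo ≤ νhi)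
    (hctbd : ∀ᵐ x ∂(volume.restrict Ω), ctlo ≤ ct x ∧ ct x ≤ cthi)
    (hνbd : ∀ᵐ x ∂(volume.restrict Ω), νlo ≤ ν x ∧ ν x ≤ νhi)
    -- the subdomain
    (Ωj : Set (EuclideanSpace ℝ (Fin d))) (hΩj : IsOpen Ωj) (hΩjsub : Ωj ⊆ Ω)
    -- the convection field, bounded a.e. on Ω_j by A∞
    (a : EuclideanSpace ℝ (Fin d) → EuclideanSpace ℝ (Fin d))
    (Ainf : ℝ) (hAinf : ∀ᵐ x ∂(volume.restrict Ωj), ‖a x‖ ≤ Ainf)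
    -- the boundary (surface) measure on ∂Ω_j \ Γ_D and the Robin coefficient
    (σj : Measure (EuclideanSpace ℝ (Fin d)))
    (α : EuclideanSpace ℝ (Fin d) → ℝ)
    -- the partition of unity function
    (δ CdPU : ℝ) (hδ : 0 < δ) (hCdPU : 0 < CdPU)
    (χ : EuclideanSpace ℝ (Fin d) → ℝ) (hχ : Differentiable ℝ χ)
    (hχgrad : ∀ x ∈ Ωj, ‖gradient χ x‖ ≤ CdPU / δ)
    -- the functions
    (v w : EuclideanSpace ℝ (Fin d) → ℝ)
    (hv : Differentiable ℝ v) (hw : Differentiable ℝ w)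
    (hvL2 : MemLp v 2 (volume.restrict Ωj)) (hwL2 : MemLp w 2 (volume.restrict Ωj))
    (hgvL2 : MemLp (gradient v) 2 (volume.restrict Ωj))
    (hgwL2 : MemLp (gradient w) 2 (volume.restrict Ωj))
    -- integrability of the relevant products
    (hint1 : IntegrableOn (fun x =>
      ct x * v x * (χ x * w x)
        + (1 / 2) * ⟪a x, gradient v x⟫ * (χ x * w x)
        - (1 / 2) * v x * ⟪a x, gradient (fun y => χ y * w y) x⟫
        + ν x * ⟪gradient v x, gradient (fun y => χ y * w y) x⟫) Ωj)
    (hint2 : IntegrableOn (fun x =>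
      ct x * (χ x * v x) * w x
        + (1 / 2) * ⟪a x, gradient (fun y => χ y * v y) x⟫ * w x
        - (1 / 2) * (χ x * v x) * ⟪a x, gradient w x⟫
        + ν x * ⟪gradient (fun y => χ y * v y) x, gradient w x⟫) Ωj) :
    |((∫ x in Ωj,
        (ct x * v x * (χ x * w x)
          + (1 / 2) * ⟪a x, gradient v x⟫ * (χ x * w x)
          - (1 / 2) * v x * ⟪a x, gradient (fun y => χ y * w y) x⟫
          + ν x * ⟪gradient v x, gradient (fun y => χ y * w y) x⟫))
        + ∫ x, α x * v x * (χ x * w x) ∂σj)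
      - ((∫ x in Ωj,
        (ct x * (χ x * v x) * w x
          + (1 / 2) * ⟪a x, gradient (fun y => χ y * v y) x⟫ * w x
          - (1 / 2) * (χ x * v x) * ⟪a x, gradient w x⟫
          + ν x * ⟪gradient (fun y => χ y * v y) x, gradient w x⟫))
        + ∫ x, α x * (χ x * v x) * w x ∂σj)|
      ≤ CdPU * (νhi / Real.sqrt (ctlo * νlo) + Ainf / ctlo) * (1 / δ)
          * Real.sqrt (∫ x in Ωj, (ct x * v x ^ 2 + ν x * ‖gradient v x‖ ^ 2))
          * Real.sqrt (∫ x in Ωj, (ct x * w x ^ 2 + ν x * ‖gradient w x‖ ^ 2)) := by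
  have hboundary : ∫ x, α x * v x * (χ x * w x) ∂σj = ∫ x, α x * (χ x * v x) * w x ∂σj := by
    congr 1; ext x; ring
  rw [hboundary, add_sub_add_right_eq_sub, ← integral_sub hint1 hint2]
  have hct' := ae_restrict_of_ae_restrict_of_subset hΩjsub hctbd
  have hν' := ae_restrict_of_ae_restrict_of_subset hΩjsub hνbd
  -- on a null Ωj the a.e. bound on ‖a‖ says nothing about the sign of Ainf, but both sides vanish
  rcases eq_or_ne (volume.restrict Ωj) 0 with hμ | hμ
  · simp [hμ]
  have hK : 0 ≤ CdPU / δ * (νhi / √(ctlo * νlo) + Ainf / ctlo) := by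
    have := ae_neBot.mpr hμ
    obtain ⟨x, hx⟩ := hAinf.exists
    have hAinf₀ : 0 ≤ Ainf := (norm_nonneg _).trans hx
    have hνhi₀ : 0 ≤ νhi := hνlo.le.trans hν
    positivity
  have hct_norm := ae_norm_le_of_ae_le_of_le hctlo.le hct'
  have hν_norm := ae_norm_le_of_ae_le_of_le hνlo.le hν'
  have henergy₀ : ∀ u : EuclideanSpace ℝ (Fin d) → ℝ,
      0 ≤ᵐ[volume.restrict Ωj] fun x => ct x * u x ^ 2 + ν x * ‖gradient u x‖ ^ 2 := fun u => by
    filter_upwards [hct', hν'] with x hcx hνx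
    have hct₀ : 0 ≤ ct x := hctlo.le.trans hcx.1
    have hν₀ : 0 ≤ ν x := hνlo.le.trans hνx.1
    positivity
  refine (abs_integral_le_mul_sqrt_mul_sqrt hK
    (integrable_mul_sq_add_mul_norm_sq hvL2 hgvL2 hctm.aestronglyMeasurable hct_norm
      hνm.aestronglyMeasurable hν_norm)
    (integrable_mul_sq_add_mul_norm_sq hwL2 hgwL2 hctm.aestronglyMeasurable hct_norm
      hνm.aestronglyMeasurable hν_norm) (henergy₀ v) (henergy₀ w) ?_).trans_eq (by ring)
  filter_upwards [hAinf, hct', hν', ae_restrict_mem hΩj.measurableSet] with x hax hcx hνx hx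
  exact (congrArg abs
    (localFormDensity_mul_sub_mul_localFormDensity ct ν a (hχ x) (hv x) (hw x))).trans_le
    (abs_commutator_density_le hctlo hνlo hcx.1 hνx.1 hνx.2 hax (hχgrad x hx))

/-- commutator bound for the local reaction-convection-diffusion bilinear
form, `|a_j(v, χw) − a_j(χv, w)| ≤ C_dPU (ν₊/√(c̃₋ν₋) + A_∞/c̃₋)(1/δ) ‖v‖‖w‖`. -/
theorem stmt13 (d : ℕ) (hd : 1 ≤ d)
    (Ω : Set (EuclideanSpace ℝ (Fin d))) (hΩo : IsOpen Ω) (hΩb : Bornology.IsBounded Ω)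
    (ct ν : EuclideanSpace ℝ (Fin d) → ℝ) (hctm : Measurable ct) (hνm : Measurable ν)
    (ctlo cthi νlo νhi : ℝ)
    (hctlo : 0 < ctlo) (hct : ctlo ≤ cthi) (hνlo : 0 < νlo) (hν : νlo ≤ νhi)
    (hctbd : ∀ᵐ x ∂(volume.restrict Ω), ctlo ≤ ct x ∧ ct x ≤ cthi)
    (hνbd : ∀ᵐ x ∂(volume.restrict Ω), νlo ≤ ν x ∧ ν x ≤ νhi)
    -- the subdomain
    (Ωj : Set (EuclideanSpace ℝ (Fin d))) (hΩj : IsOpen Ωj) (hΩjsub : Ωj ⊆ Ω)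
    -- the convection field, bounded a.e. on Ω_j by A∞
    (a : EuclideanSpace ℝ (Fin d) → EuclideanSpace ℝ (Fin d)) (ham : Measurable a)
    (Ainf : ℝ) (hAinf : ∀ᵐ x ∂(volume.restrict Ωj), ‖a x‖ ≤ Ainf)
    -- the boundary (surface) measure on ∂Ω_j \ Γ_D and the Robin coefficient
    (σj : Measure (EuclideanSpace ℝ (Fin d)))
    (α : EuclideanSpace ℝ (Fin d) → ℝ) (hαm : Measurable α)
    -- the partition of unity function
    (δ CdPU : ℝ) (hδ : 0 < δ) (hCdPU : 0 < CdPU)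
    (χ : EuclideanSpace ℝ (Fin d) → ℝ) (hχ : Differentiable ℝ χ)
    (hχbd : ∀ x ∈ Ωj, |χ x| ≤ 1)
    (hχgrad : ∀ x ∈ Ωj, ‖gradient χ x‖ ≤ CdPU / δ)
    -- the functions
    (v w : EuclideanSpace ℝ (Fin d) → ℝ)
    (hv : Differentiable ℝ v) (hw : Differentiable ℝ w)
    (hvL2 : MemLp v 2 (volume.restrict Ωj)) (hwL2 : MemLp w 2 (volume.restrict Ωj))
    (hgvL2 : MemLp (gradient v) 2 (volume.restrict Ωj))
    (hgwL2 : MemLp (gradient w) 2 (volume.restrict Ωj))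
    (hvσ : MemLp v 2 σj) (hwσ : MemLp w 2 σj)
    (hχvL2 : MemLp (fun x => χ x * v x) 2 (volume.restrict Ωj))
    (hgχvL2 : MemLp (gradient fun x => χ x * v x) 2 (volume.restrict Ωj))
    (hχwL2 : MemLp (fun x => χ x * w x) 2 (volume.restrict Ωj))
    (hgχwL2 : MemLp (gradient fun x => χ x * w x) 2 (volume.restrict Ωj))
    -- integrability of the relevant products
    (hint1 : IntegrableOn (fun x =>
      ct x * v x * (χ x * w x)
        + (1 / 2) * ⟪a x, gradient v x⟫ * (χ x * w x)
        - (1 / 2) * v x * ⟪a x, gradient (fun y => χ y * w y) x⟫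
        + ν x * ⟪gradient v x, gradient (fun y => χ y * w y) x⟫) Ωj)
    (hint2 : IntegrableOn (fun x =>
      ct x * (χ x * v x) * w x
        + (1 / 2) * ⟪a x, gradient (fun y => χ y * v y) x⟫ * w x
        - (1 / 2) * (χ x * v x) * ⟪a x, gradient w x⟫
        + ν x * ⟪gradient (fun y => χ y * v y) x, gradient w x⟫) Ωj)
    (hint3 : Integrable (fun x => α x * v x * (χ x * w x)) σj)
    (hint4 : Integrable (fun x => α x * (χ x * v x) * w x) σj) :
    |((∫ x in Ωj,
        (ct x * v x * (χ x * w x)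
          + (1 / 2) * ⟪a x, gradient v x⟫ * (χ x * w x)
          - (1 / 2) * v x * ⟪a x, gradient (fun y => χ y * w y) x⟫
          + ν x * ⟪gradient v x, gradient (fun y => χ y * w y) x⟫))
        + ∫ x, α x * v x * (χ x * w x) ∂σj)
      - ((∫ x in Ωj,
        (ct x * (χ x * v x) * w x
          + (1 / 2) * ⟪a x, gradient (fun y => χ y * v y) x⟫ * w x
          - (1 / 2) * (χ x * v x) * ⟪a x, gradient w x⟫
          + ν x * ⟪gradient (fun y => χ y * v y) x, gradient w x⟫))
        + ∫ x, α x * (χ x * v x) * w x ∂σj)|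
      ≤ CdPU * (νhi / Real.sqrt (ctlo * νlo) + Ainf / ctlo) * (1 / δ)
          * Real.sqrt (∫ x in Ωj, (ct x * v x ^ 2 + ν x * ‖gradient v x‖ ^ 2))
          * Real.sqrt (∫ x in Ωj, (ct x * w x ^ 2 + ν x * ‖gradient w x‖ ^ 2)) :=
  stmt13_general d Ω ct ν hctm hνm ctlo cthi νlo νhi hctlo hνlo hν hctbd hνbd Ωj hΩj hΩjsub a Ainf
    hAinf σj α δ CdPU hδ hCdPU χ hχ hχgrad v w hv hw hvL2 hwL2 hgvL2 hgwL2 hint1 hint2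
end
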